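/- arXiv:0904.3827 — 5 statements merged into one kernel-verified Lean document; each statement's English description precedes it below -/
import Mathlib

section
/- The degree of the field extension K/k equals the order of the Galois group of α over k: dim_k K = |G|. -/
open MvPolynomial Polynomial

variable (k : Type*) {K : Type*} [Field k] [Field K] [Algebra k K] {n : ℕ}

/-- The ideal of `α`-relations. -/
noncomputable def relIdeal (α : Fin n → K) : Ideal (MvPolynomial (Fin n) k) :=
  RingHom.ker (MvPolynomial.aeval α : MvPolynomial (Fin n) k →ₐ[k] K)

/-- The Galois group of `α` over `k`: permutations stabilizing the ideal of relations. -/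
def galoisGroup (α : Fin n → K) : Subgroup (Equiv.Perm (Fin n)) where
  carrier := {σ | MvPolynomial.rename ⇑σ '' (relIdeal k α : Set (MvPolynomial (Fin n) k))
      = (relIdeal k α : Set (MvPolynomial (Fin n) k))}
  one_mem' := by
    have h : ∀ p : MvPolynomial (Fin n) k, rename ⇑(1 : Equiv.Perm (Fin n)) p = p := by
      intro p; simp [Equiv.Perm.coe_one, rename_id]
    simp only [Set.mem_setOf_eq]
    rw [Set.image_congr' h]
    exact Set.image_id _
  mul_mem' := by
    intro σ τ hσ hτ
    simp only [Set.mem_setOf_eq] at *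
    have h : ∀ p : MvPolynomial (Fin n) k,
        rename ⇑(σ * τ) p = rename ⇑σ (rename ⇑τ p) := by
      intro p; rw [rename_rename]; rfl
    rw [Set.image_congr' h]
    calc (fun p => rename ⇑σ (rename ⇑τ p)) '' (relIdeal k α : Set (MvPolynomial (Fin n) k))
        = rename ⇑σ '' (rename ⇑τ '' (relIdeal k α : Set (MvPolynomial (Fin n) k))) :=
          (Set.image_comp _ _ _)
      _ = _ := by rw [hτ, hσ]
  inv_mem' := by
    intro σ hσ
    simp only [Set.mem_setOf_eq] at *
    conv_lhs => rw [← hσ]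
    rw [← Set.image_comp]
    have h : ∀ p : MvPolynomial (Fin n) k,
        (rename ⇑σ⁻¹ ∘ rename ⇑σ) p = p := by
      intro p
      simp only [Function.comp_apply, rename_rename]
      have : (⇑σ⁻¹ ∘ ⇑σ) = id := by
        funext i; simp
      rw [this, rename_id]; rfl
    rw [Set.image_congr' h]
    exact Set.image_id _

/-! Lifting `∏ (X - C (α i))` to `k[X]` exhibits `K` as the splitting field of a separable
polynomial, so `K/k` is Galois and `[K : k] = |Aut(K/k)|`. An automorphism `τ` permutes the
roots, `α ∘ σ = τ ∘ α`, and then `σ` preserves `𝔐`; distinct `τ` give distinct `σ` because the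
`α i` generate `K`. Conversely, if `σ` preserves `𝔐`, then `aeval α` and `aeval (α ∘ σ)` are
surjections `k[x₁, …, xₙ] → K` with the same kernel, hence differ by an automorphism of `K`. -/

open Function Set

section PermOfMapsTo

variable {ι L : Type*} [Finite ι] {β : ι → L} {τ : L → L}

noncomputable def permOfMapsTo (hβ : Injective β) (hτ : Injective τ)
    (hmaps : MapsTo τ (range β) (range β)) : Equiv.Perm ι :=
  ((Equiv.ofInjective β hβ).trans
    ((((finite_range β).injOn_iff_bijOn_of_mapsTo hmaps).mp hτ.injOn).equiv τ)).trans
    (Equiv.ofInjective β hβ).symm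

theorem apply_permOfMapsTo (hβ : Injective β) (hτ : Injective τ)
    (hmaps : MapsTo τ (range β) (range β)) (i : ι) :
    β (permOfMapsTo hβ hτ hmaps i) = τ (β i) := by
  simp [permOfMapsTo, Equiv.apply_ofInjective_symm, BijOn.equiv]

end PermOfMapsTo

section RelIdeal

variable {k} {L : Type*} [Field L] [Algebra k L]

theorem relIdeal_algHom_comp (α : Fin n → K) (τ : K →ₐ[k] L) :
    relIdeal k (τ ∘ α) = relIdeal k α := by
  ext P
  simp only [relIdeal, RingHom.mem_ker]
  rw [comp_def, ← comp_aeval_apply, map_eq_zero]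

theorem comap_rename_relIdeal (α : Fin n → K) (σ : Equiv.Perm (Fin n)) :
    (relIdeal k α).comap (rename σ) = relIdeal k (α ∘ σ) := by
  ext P
  simp [relIdeal, aeval_rename]

theorem mem_galoisGroup_iff {α : Fin n → K} {σ : Equiv.Perm (Fin n)} :
    σ ∈ galoisGroup k α ↔ relIdeal k (α ∘ σ) = relIdeal k α := by
  rw [← comap_rename_relIdeal, eq_comm, ← SetLike.coe_set_eq, Ideal.coe_comap,
    Set.eq_preimage_iff_image_eq (f := rename σ) (renameEquiv k σ).bijective]
  rfl

theorem surjective_aeval_of_adjoin_eq_top {A : Type*} [CommSemiring A] [Algebra k A]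
    {α : Fin n → A} (hα : Algebra.adjoin k (range α) = ⊤) :
    Surjective (aeval α : MvPolynomial (Fin n) k →ₐ[k] A) := by
  rw [← AlgHom.range_eq_top, ← Algebra.adjoin_range_eq_range_aeval, hα]

theorem exists_algEquiv_of_relIdeal_le {α : Fin n → K} {β : Fin n → L}
    (hα : Algebra.adjoin k (range α) = ⊤) (hβ : Algebra.adjoin k (range β) = ⊤)
    (h : relIdeal k α ≤ relIdeal k β) : ∃ τ : K ≃ₐ[k] L, ∀ i, τ (α i) = β i := by
  have hsα := surjective_aeval_of_adjoin_eq_top hα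
  let τ : K →ₐ[k] L := (MvPolynomial.aeval α).liftOfSurjective hsα (MvPolynomial.aeval β) h
  have hτα (i : Fin n) : τ (α i) = β i := by
    simpa using (MvPolynomial.aeval α).liftOfSurjective_apply hsα (MvPolynomial.aeval β) h (X i)
  have hτ : Surjective τ := AlgHom.liftOfSurjective_surjective _ _ _ _
    (surjective_aeval_of_adjoin_eq_top hβ)
  exact ⟨AlgEquiv.ofBijective τ ⟨τ.injective, hτ⟩, hτα⟩

end RelIdeal

section SplitsAsProduct

variable {k} {α : Fin n → K} {g : k[X]}

theorem rootSet_eq_range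
    (hg : g.map (algebraMap k K) = ∏ i, (Polynomial.X - Polynomial.C (α i))) :
    g.rootSet K = range α := by
  classical
  ext x
  have hne : ∏ i, (Polynomial.X - Polynomial.C (α i)) ≠ 0 :=
    (monic_prod_of_monic _ _ fun i _ => monic_X_sub_C _).ne_zero
  simp only [mem_rootSet', hg, ne_eq, hne, not_false_eq_true, ← eval_map_algebraMap,
    Polynomial.eval_prod, Polynomial.eval_sub, Polynomial.eval_X, Polynomial.eval_C,
    Finset.prod_eq_zero_iff, Finset.mem_univ, sub_eq_zero, true_and, mem_range]
  exact exists_congr fun _ => eq_comm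

theorem isSplittingField_of_map_eq_prod
    (hg : g.map (algebraMap k K) = ∏ i, (Polynomial.X - Polynomial.C (α i)))
    (hgen : Algebra.adjoin k (range α) = ⊤) : IsSplittingField k K g :=
  ⟨hg ▸ Splits.prod fun i _ => Splits.X_sub_C _, by rw [rootSet_eq_range hg, hgen]⟩

theorem separable_of_map_eq_prod (hα : Injective α)
    (hg : g.map (algebraMap k K) = ∏ i, (Polynomial.X - Polynomial.C (α i))) : g.Separable := by
  rw [← separable_map (algebraMap k K), hg]
  exact separable_prod_X_sub_C_iff.mpr hα

end SplitsAsProduct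

section AutToGaloisGroup

variable {k} {α : Fin n → K}

theorem mem_galoisGroup_of_apply_eq (τ : K →ₐ[k] K) {σ : Equiv.Perm (Fin n)}
    (h : ∀ i, α (σ i) = τ (α i)) : σ ∈ galoisGroup k α :=
  mem_galoisGroup_iff.mpr ((_root_.funext h : α ∘ σ = τ ∘ α) ▸ relIdeal_algHom_comp α τ)

noncomputable def autToGaloisGroup (hα : Injective α)
    (hmaps : ∀ τ : K ≃ₐ[k] K, MapsTo τ (range α) (range α)) (τ : K ≃ₐ[k] K) :
    galoisGroup k α :=
  ⟨permOfMapsTo hα τ.injective (hmaps τ),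
    mem_galoisGroup_of_apply_eq (τ : K →ₐ[k] K) (apply_permOfMapsTo hα τ.injective (hmaps τ))⟩

theorem apply_autToGaloisGroup (hα : Injective α)
    (hmaps : ∀ τ : K ≃ₐ[k] K, MapsTo τ (range α) (range α)) (τ : K ≃ₐ[k] K) (i : Fin n) :
    α ((autToGaloisGroup hα hmaps τ : Equiv.Perm (Fin n)) i) = τ (α i) :=
  apply_permOfMapsTo hα τ.injective (hmaps τ) i

theorem bijective_autToGaloisGroup (hα : Injective α)
    (hmaps : ∀ τ : K ≃ₐ[k] K, MapsTo τ (range α) (range α))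
    (hgen : Algebra.adjoin k (range α) = ⊤) : Bijective (autToGaloisGroup hα hmaps) := by
  refine ⟨fun τ τ' h => ?_, fun ⟨σ, hσ⟩ => ?_⟩
  · have hEq : EqOn τ τ' (range α) := by
      rintro _ ⟨i, rfl⟩
      rw [← apply_autToGaloisGroup hα hmaps τ, ← apply_autToGaloisGroup hα hmaps τ', h]
    exact AlgEquiv.coe_toAlgHom_injective (AlgHom.ext_of_adjoin_eq_top hgen hEq)
  · have hgenσ : Algebra.adjoin k (range (α ∘ σ)) = ⊤ := by rw [EquivLike.range_comp, hgen]
    obtain ⟨τ, hτ⟩ := exists_algEquiv_of_relIdeal_le hgen hgenσ (mem_galoisGroup_iff.mp hσ).ge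
    refine ⟨τ, Subtype.ext (Equiv.ext fun i => hα ?_)⟩
    rw [apply_autToGaloisGroup hα hmaps τ, hτ, comp_apply]

end AutToGaloisGroup

/-- `dim_k K = |G|`. -/
theorem finrank_eq_card_galoisGroup (α : Fin n → K) (hinj : Function.Injective α)
    (hcoeff : ∀ m : ℕ, (∏ i : Fin n, (Polynomial.X - Polynomial.C (α i)) : K[X]).coeff m ∈ (algebraMap k K).range)
    (hgen : Algebra.adjoin k (Set.range α) = ⊤) :
    Module.finrank k K = Nat.card (galoisGroup k α) := by
  obtain ⟨g, hg⟩ := (mem_lifts _).mp ((lifts_iff_coeff_lifts _).mpr hcoeff)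
  have := isSplittingField_of_map_eq_prod hg hgen
  have := IsSplittingField.finiteDimensional K g
  have := IsGalois.of_separable_splitting_field (E := K) (separable_of_map_eq_prod hinj hg)
  have hmaps (τ : K ≃ₐ[k] K) : MapsTo τ (range α) (range α) :=
    rootSet_eq_range hg ▸ rootSet_mapsTo (τ : K →ₐ[k] K)
  rw [← IsGalois.card_aut_eq_finrank]
  exact Nat.card_congr (Equiv.ofBijective _ (bijective_autToGaloisGroup hinj hmaps hgen))
end

section
/- Every β ∈ K is algebraic over k, and the image in K[X] of its minimal polynomial over k equals ∏_{γ ∈ {Φ(g)(β) : g ∈ G}} (X − γ), the product being taken over the (finite) set of distinct conjugates Φ(g)(β) of β under the Galois group G. -/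
/-!
The polynomial `∏ i, (X - α i)` comes from some `f ∈ k[X]`; it has distinct roots, and they
generate `K`, so `K/k` is the splitting field of the separable polynomial `f`, hence Galois. So the minimal polynomial
of `β` splits in `K` with simple roots, and these roots are the images of `β` under
`k`-automorphisms `φ`. Such a `φ` permutes the roots of `f`, say `φ ∘ α = α ∘ σ`; then
`aeval α ∘ rename σ = φ ∘ aeval α`, so `σ` stabilizes the ideal of relations, i.e.
`σ ∈ G`, and `Φ σ = φ` because both agree on the generators `α i`.
-/

open MvPolynomial Polynomial

variable (k : Type*) {K : Type*} [Field k] [Field K] [Algebra k K] {n : ℕ}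

theorem map_minpoly_eq_prod_of_coe_eq_rootSet [Normal k K] [Algebra.IsSeparable k K] (β : K)
    {s : Finset K} (hs : (s : Set K) = (minpoly k β).rootSet K) :
    (minpoly k β).map (algebraMap k K) = ∏ γ ∈ s, (Polynomial.X - Polynomial.C γ) := by
  classical
  have hnodup : ((minpoly k β).aroots K).Nodup :=
    nodup_roots (Polynomial.Separable.map (Algebra.IsSeparable.isSeparable k β))
  rw [rootSet_def, Finset.coe_inj] at hs
  rw [hs, Finset.prod_eq_multiset_prod, Multiset.toFinset_val, hnodup.dedup]
  exact (Normal.splits inferInstance β).eq_prod_roots_of_monic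
    ((minpoly.monic (Algebra.IsIntegral.isIntegral β)).map _)

theorem aeval_rename_of_comp_eq {L : Type*} [CommRing L] [Algebra k L] {α : Fin n → K}
    {α' : Fin n → L} {σ : Fin n → Fin n} {φ : K →ₐ[k] L} (h : α' ∘ σ = φ ∘ α)
    (P : MvPolynomial (Fin n) k) :
    MvPolynomial.aeval α' (rename σ P) = φ (MvPolynomial.aeval α P) := by
  rw [aeval_rename, h, MvPolynomial.comp_aeval_apply]
  rfl

theorem mem_galoisGroup_of_comp_eq {α : Fin n → K} {σ : Equiv.Perm (Fin n)} (φ : K →ₐ[k] K)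
    (h : α ∘ σ = φ ∘ α) : σ ∈ galoisGroup k α := by
  have hpre : rename σ ⁻¹' (relIdeal k α : Set (MvPolynomial (Fin n) k)) = relIdeal k α := by
    ext P
    simp only [Set.mem_preimage, SetLike.mem_coe, relIdeal, RingHom.mem_ker,
      aeval_rename_of_comp_eq k h]
    exact map_eq_zero_iff _ φ.injective
  calc rename σ '' (relIdeal k α : Set (MvPolynomial (Fin n) k))
      = rename σ '' (rename σ ⁻¹' relIdeal k α) := by rw [hpre]
    _ = relIdeal k α := (renameEquiv k σ).surjective.image_preimage _

section Roots

variable {k} {α : Fin n → K} {f : k[X]}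
  (hf : f.map (algebraMap k K) = ∏ i, (Polynomial.X - Polynomial.C (α i)))
include hf

theorem rootSet_eq_range_of_map_eq_prod : f.rootSet K = Set.range α := by
  have hf0 : f.map (algebraMap k K) ≠ 0 := by
    rw [hf]; exact (monic_prod_of_monic _ _ fun i _ => monic_X_sub_C (α i)).ne_zero
  ext γ
  rw [mem_rootSet', and_iff_right hf0, Polynomial.aeval_def, ← Polynomial.eval_map, hf,
    Polynomial.eval_prod, Finset.prod_eq_zero_iff]
  simp [sub_eq_zero, eq_comm]

theorem isSplittingField_of_map_eq_prod_s2 (hgen : Algebra.adjoin k (Set.range α) = ⊤) :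
    IsSplittingField k K f where
  splits' := hf ▸ Splits.prod fun i _ => Splits.X_sub_C (α i)
  adjoin_rootSet' := rootSet_eq_range_of_map_eq_prod hf ▸ hgen

theorem separable_of_map_eq_prod_s2 (hinj : Function.Injective α) : f.Separable := by
  rw [← separable_map (algebraMap k K), hf]
  exact separable_prod_X_sub_C_iff.mpr hinj

theorem isGalois_of_map_eq_prod (hinj : Function.Injective α)
    (hgen : Algebra.adjoin k (Set.range α) = ⊤) : IsGalois k K :=
  have := isSplittingField_of_map_eq_prod_s2 hf hgen
  IsGalois.of_separable_splitting_field (separable_of_map_eq_prod_s2 hf hinj)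

theorem exists_perm_comp_eq (hinj : Function.Injective α) (φ : K →ₐ[k] K) :
    ∃ σ : Equiv.Perm (Fin n), α ∘ σ = φ ∘ α := by
  have hmaps : Set.MapsTo φ (Set.range α) (Set.range α) :=
    rootSet_eq_range_of_map_eq_prod hf ▸ rootSet_mapsTo φ
  choose τ hτ using fun i => hmaps (Set.mem_range_self i)
  have hτ_inj : Function.Injective τ := fun i j hij =>
    hinj <| φ.injective <| by simpa [hτ] using congrArg α hij
  exact ⟨Equiv.ofBijective τ (Finite.injective_iff_bijective.mp hτ_inj), funext hτ⟩

theorem range_galoisGroup_apply_eq_range_algHom_apply (hinj : Function.Injective α)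
    (hgen : Algebra.adjoin k (Set.range α) = ⊤) (Φ : Equiv.Perm (Fin n) → (K ≃ₐ[k] K))
    (hΦ : ∀ σ ∈ galoisGroup k α, ∀ i, Φ σ (α i) = α (σ i)) (β : K) :
    Set.range (fun g : galoisGroup k α => Φ g β) =
      Set.range (fun ψ : K →ₐ[k] K => ψ β) := by
  ext γ
  constructor
  · rintro ⟨g, rfl⟩
    exact ⟨Φ g, rfl⟩
  · rintro ⟨ψ, rfl⟩
    obtain ⟨σ, hσ⟩ := exists_perm_comp_eq hf hinj ψ
    have hσG := mem_galoisGroup_of_comp_eq k ψ hσ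
    have hΦσ : (Φ σ : K →ₐ[k] K) = ψ := AlgHom.ext_of_adjoin_eq_top hgen <| by
      rintro _ ⟨i, rfl⟩
      exact (hΦ σ hσG i).trans (congrFun hσ i)
    exact ⟨⟨σ, hσG⟩, DFunLike.congr_fun hΦσ β⟩

end Roots

/-- every `β ∈ K` is algebraic over `k` and its minimal polynomial is the
product over the distinct Galois conjugates of `β`. -/
theorem minpoly_eq_prod_conjugates (α : Fin n → K) (hinj : Function.Injective α)
    (hcoeff : ∀ m : ℕ, (∏ i : Fin n, (Polynomial.X - Polynomial.C (α i)) : K[X]).coeff m ∈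
      (algebraMap k K).range)
    (hgen : Algebra.adjoin k (Set.range α) = ⊤)
    (Φ : Equiv.Perm (Fin n) → (K ≃ₐ[k] K))
    (hΦ : ∀ σ ∈ galoisGroup k α, ∀ i : Fin n, Φ σ (α i) = α (σ i))
    (β : K) :
    IsAlgebraic k β ∧
      (minpoly k β).map (algebraMap k K) =
        ∏ γ ∈ (Set.toFinite (Set.range (fun g : galoisGroup k α => Φ (g : Equiv.Perm (Fin n)) β))).toFinset,
          (Polynomial.X - Polynomial.C γ) := by
  obtain ⟨f, hf⟩ := (mem_lifts _).mp ((lifts_iff_coeff_lifts _).mpr hcoeff)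
  have := isGalois_of_map_eq_prod hf hinj hgen
  refine ⟨Algebra.IsAlgebraic.isAlgebraic β, map_minpoly_eq_prod_of_coe_eq_rootSet k β ?_⟩
  rw [Set.Finite.coe_toFinset, range_galoisGroup_apply_eq_range_algHom_apply hf hinj hgen Φ hΦ]
  exact Algebra.IsAlgebraic.range_eval_eq_rootSet_minpoly_of_splits K
    (Normal.splits inferInstance) β
end

section
/- Assume L is finite. If the multiset of cardinalities of the orbits of G acting by left multiplication on L/H equals the multiset of cardinalities of the orbits of H acting by left multiplication on L/H, and |G| = |H|, then G and H are conjugate in L. -/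
/-!
`H` fixes the trivial coset, so it has an orbit of size one on `L ⧸ H`. The matching `G`-orbit
is then a single coset `τH` fixed by `G`, so `G` lies in its stabilizer `τHτ⁻¹`; since
`|G| = |H| = |τHτ⁻¹|`, the two are equal.
-/

open MulAction

namespace MulAction

theorem card_orbit_eq_one_iff_mem_fixedPoints {M α : Type*} [Monoid M] [MulAction M α] {a : α} :
    Nat.card (orbit M a) = 1 ↔ a ∈ fixedPoints M α := by
  rw [← subsingleton_orbit_iff_mem_fixedPoints, Nat.card_eq_one_iff_unique,
    Set.subsingleton_coe]
  exact and_iff_left (nonempty_orbit a).to_subtype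

theorem orbitRel.Quotient.out_mem_fixedPoints_of_card_orbit_eq_one {G α : Type*} [Group G]
    [MulAction G α] {o : orbitRel.Quotient G α} (ho : Nat.card o.orbit = 1) :
    o.out ∈ fixedPoints G α := by
  rwa [orbitRel.Quotient.orbit_eq_orbit_out o Quotient.out_eq',
    card_orbit_eq_one_iff_mem_fixedPoints] at ho

end MulAction

theorem Subgroup.mem_fixedPoints_iff_le_stabilizer {L α : Type*} [Group L] [MulAction L α]
    {G : Subgroup L} {a : α} : a ∈ fixedPoints G α ↔ G ≤ stabilizer L a :=
  ⟨fun h g hg => h ⟨g, hg⟩, fun h g => h g.2⟩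

namespace QuotientGroup

variable {L : Type*} [Group L] (H : Subgroup L)

theorem stabilizer_mk (τ : L) :
    stabilizer L (τ : L ⧸ H) = H.map (MulAut.conj τ).toMonoidHom := by
  have hmk : (τ : L ⧸ H) = τ • ((1 : L) : L ⧸ H) := by
    rw [MulAction.Quotient.smul_mk, smul_eq_mul, mul_one]
  rw [hmk, stabilizer_smul_eq_stabilizer_map_conj, stabilizer_quotient]

theorem mk_one_mem_fixedPoints : ((1 : L) : L ⧸ H) ∈ fixedPoints H (L ⧸ H) :=
  Subgroup.mem_fixedPoints_iff_le_stabilizer.2 (stabilizer_quotient H).ge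

end QuotientGroup

/-- if `L` is finite, the multisets of orbit cardinalities of `G` and of `H` on
`L/H` coincide, and `|G| = |H|`, then `G` and `H` are conjugate in `L`. -/
theorem conj_of_orbit_card_eq {L : Type*} [Group L] [Finite L] (G H : Subgroup L)
    (e : MulAction.orbitRel.Quotient G (L ⧸ H) ≃ MulAction.orbitRel.Quotient H (L ⧸ H))
    (he : ∀ o, Nat.card o.orbit = Nat.card (e o).orbit)
    (hcard : Nat.card G = Nat.card H) :
    ∃ τ : L, Subgroup.map (MulAut.conj τ).toMonoidHom H = G := by
  set o := e.symm (Quotient.mk'' ((1 : L) : L ⧸ H))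
  have ho : Nat.card o.orbit = 1 := by
    rw [he, Equiv.apply_symm_apply, orbitRel.Quotient.orbit_mk,
      card_orbit_eq_one_iff_mem_fixedPoints]
    exact QuotientGroup.mk_one_mem_fixedPoints H
  obtain ⟨τ, hτ⟩ := QuotientGroup.mk_surjective o.out
  have hle : G ≤ H.map (MulAut.conj τ).toMonoidHom := by
    rw [← QuotientGroup.stabilizer_mk, ← Subgroup.mem_fixedPoints_iff_le_stabilizer, hτ]
    exact orbitRel.Quotient.out_mem_fixedPoints_of_card_orbit_eq_one ho
  refine ⟨τ, (Subgroup.eq_of_le_of_card_ge hle ?_).symm⟩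
  rw [Subgroup.card_map_of_injective (MulAut.conj τ).injective, hcard]
end

section
/- Let P ∈ F, H = Stab_L(P), and J = ⋂_{σ ∈ L} σHσ⁻¹ (the normal core of H in L). Then the subfield of F generated over the fixed field F^L by the orbit L·P = {σ·P : σ ∈ L} equals the fixed field F^J. -/
/-!
By Artin's theorem `F / F^L` is Galois with group `L`, so the intermediate field generated by the
orbit is the fixed field of its fixing subgroup, the pointwise stabilizer of `L·P`. Since
`Stab(σ·P) = σ Stab(P) σ⁻¹`, that pointwise stabilizer is the normal core.
-/

open Polynomial

/-- The subfield of elements of `F` fixed by every element of the subgroup `U` of `L`. -/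
def fixedSubfield (L : Type*) [Group L] (F : Type*) [Field F] [MulSemiringAction L F]
    (U : Subgroup L) : Subfield F where
  carrier := {x : F | ∀ σ ∈ U, σ • x = x}
  mul_mem' := by
    intro a b ha hb σ hσ
    rw [smul_mul', ha σ hσ, hb σ hσ]
  one_mem' := by intro σ hσ; rw [smul_one]
  add_mem' := by
    intro a b ha hb σ hσ
    rw [smul_add, ha σ hσ, hb σ hσ]
  zero_mem' := by intro σ hσ; rw [smul_zero]
  neg_mem' := by
    intro a ha σ hσ
    rw [smul_neg, ha σ hσ]
  inv_mem' := by
    intro a ha σ hσ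
    rw [smul_inv'', ha σ hσ]

theorem MulAction.iInf_map_conj_stabilizer_eq_fixingSubgroup_range {G α : Type*} [Group G]
    [MulAction G α] (a : α) :
    ⨅ g : G, (stabilizer G a).map (MulAut.conj g).toMonoidHom =
      fixingSubgroup G (Set.range fun g : G => g • a) := by
  simp_rw [← stabilizer_smul_eq_stabilizer_map_conj]
  ext h
  simp [mem_fixingSubgroup_iff, Subgroup.mem_iInf]

theorem fixingSubgroup_adjoin {G K L : Type*} [Group G] [Field K] [Field L] [Algebra K L]
    [MulSemiringAction G L] [SMulCommClass G K L] (S : Set L) :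
    fixingSubgroup G ((IntermediateField.adjoin K S : IntermediateField K L) : Set L) =
      fixingSubgroup G S := by
  refine le_antisymm (fixingSubgroup_antitone G L (IntermediateField.subset_adjoin K S)) ?_
  rw [← IsGaloisGroup.le_fixedPoints_iff_le_fixingSubgroup, IntermediateField.adjoin_le_iff]
  exact fun x hx g => g.2 ⟨x, hx⟩

theorem IsGaloisGroup.fixedPoints_fixingSubgroup_eq_adjoin {G K L : Type*} [Group G] [Finite G]
    [Field K] [Field L] [Algebra K L] [MulSemiringAction G L] [IsGaloisGroup G K L] (S : Set L) :
    FixedPoints.intermediateField (fixingSubgroup G S) = IntermediateField.adjoin K S := by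
  rw [← fixingSubgroup_adjoin (K := K), IsGaloisGroup.fixedPoints_fixingSubgroup]

theorem fixedSubfield_eq_toSubfield_fixedPoints {L F : Type*} [Group L] [Field F]
    [MulSemiringAction L F] (K : Type*) [Field K] [Algebra K F] [SMulCommClass L K F]
    (U : Subgroup L) :
    fixedSubfield L F U = (FixedPoints.intermediateField U : IntermediateField K F).toSubfield := by
  ext x
  exact ⟨fun hx σ => hx σ σ.2, fun hx σ hσ => hx ⟨σ, hσ⟩⟩

theorem coe_fixedSubfield_top (L F : Type*) [Group L] [Field F] [MulSemiringAction L F] :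
    (fixedSubfield L F ⊤ : Set F) = Set.range (algebraMap (FixedPoints.subfield L F) F) := by
  ext x
  exact ⟨fun hx => ⟨⟨x, fun σ => hx σ trivial⟩, rfl⟩, by rintro ⟨y, rfl⟩ σ -; exact y.2 σ⟩

/-- the subfield generated over the fixed field `F^L` by the orbit `L·P` is the
fixed field of the normal core `⋂_{σ ∈ L} σ Stab_L(P) σ⁻¹`. -/
theorem closure_orbit_eq_fixed_normalCore {F : Type*} [Field F] (L : Type*) [Group L] [Finite L]
    [MulSemiringAction L F] (hfaithful : ∀ σ τ : L, (∀ x : F, σ • x = τ • x) → σ = τ)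
    (P : F) :
    Subfield.closure
        (SetLike.coe (fixedSubfield L F (⊤ : Subgroup L)) ∪ Set.range (fun σ : L => σ • P)) =
      fixedSubfield L F
        (⨅ σ : L, Subgroup.map (MulAut.conj σ).toMonoidHom (MulAction.stabilizer L P)) := by
  have : FaithfulSMul L F := ⟨hfaithful _ _⟩
  rw [coe_fixedSubfield_top, ← IntermediateField.adjoin_toSubfield,
    MulAction.iInf_map_conj_stabilizer_eq_fixingSubgroup_range,
    fixedSubfield_eq_toSubfield_fixedPoints (FixedPoints.subfield L F),
    IsGaloisGroup.fixedPoints_fixingSubgroup_eq_adjoin]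
end

section
/- Assume the field k is infinite, and let H ≤ L be subgroups of S_n. Then there exists a polynomial P ∈ k[x_1,…,x_n] such that Stab_L(P) := {σ ∈ L : σ·P = P} = H and the map from the left cosets L/H to K sending σH to aeval α (σ·P) is well defined and injective; i.e. there exists an H-invariant L-primitive polynomial whose L-relative resolvent of α has no multiple root. -/
/-!
For an orbit sum `P = ∑_{h ∈ H} h · Q`, the value of `σ · P` at `α` is the sum of `Q` over the
points `α ∘ g`, `g ∈ σH`. Since `α` is injective, distinct cosets give disjoint sets of points,
and polynomial interpolation yields a `Q` separating any given pair of cosets. For each pair this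
is a nonzero `k`-linear condition on `Q`, and a vector space over an infinite field is not a
finite union of proper subspaces, so a single `Q` separates all cosets. The resulting `P` is
`H`-invariant, and `σ · P = P` with `σ ∉ H` would contradict the separation of `σH` from `H`.
-/

open MvPolynomial

namespace MvPolynomial

theorem exists_aeval_eq_one_and_forall_aeval_eq_zero {ι K : Type*} [Field K] (a : ι → K)
    (T : Finset (ι → K)) (ha : a ∉ T) :
    ∃ Q : MvPolynomial ι K, aeval a Q = 1 ∧ ∀ b ∈ T, aeval b Q = 0 := by
  classical
  induction T using Finset.induction_on with
  | empty => exact ⟨1, by simp, by simp⟩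
  | @insert b T _ ih =>
    obtain ⟨Q, hQa, hQT⟩ := ih fun h => ha (Finset.mem_insert_of_mem h)
    obtain ⟨i, hi⟩ : ∃ i, a i ≠ b i :=
      Function.ne_iff.1 fun h => ha (h ▸ Finset.mem_insert_self b T)
    refine ⟨Q * (C (a i - b i)⁻¹ * (X i - C (b i))), ?_, ?_⟩
    · simp [show eval a Q = 1 from hQa, inv_mul_cancel₀ (sub_ne_zero.2 hi)]
    · intro c hc
      rcases Finset.mem_insert.1 hc with rfl | hc
      · simp
      · simp [show eval c Q = 0 from hQT c hc]

/-- Monomials have coefficients in `k`, and by linearity they suffice to test the equality, which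
over `K` fails for an interpolating polynomial. -/
theorem exists_sum_aeval_ne_sum_aeval {ι k K : Type*} [CommSemiring k] [Field K] [Algebra k K]
    {A B : Finset (ι → K)} (hA : A.Nonempty) (hAB : Disjoint A B) :
    ∃ Q : MvPolynomial ι k, ∑ a ∈ A, aeval a Q ≠ ∑ b ∈ B, aeval b Q := by
  classical
  by_contra! hsum
  have hK : ∑ a ∈ A, (aeval a).toLinearMap = ∑ b ∈ B, ((aeval b).toLinearMap :
      MvPolynomial ι K →ₗ[K] K) := by
    refine linearMap_ext fun d => LinearMap.ext fun c => ?_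
    have := hsum (monomial d 1)
    simp only [aeval_monomial, map_one, one_mul] at this
    simp [eval_monomial, ← Finset.mul_sum, this]
  obtain ⟨a, haA⟩ := hA
  obtain ⟨Q, hQa, hQ⟩ := exists_aeval_eq_one_and_forall_aeval_eq_zero a (A.erase a ∪ B)
    (by simpa using Finset.disjoint_left.1 hAB haA)
  have := LinearMap.congr_fun hK Q
  simp only [LinearMap.sum_apply, AlgHom.toLinearMap_apply] at this
  rw [← Finset.add_sum_erase A _ haA, hQa,
    Finset.sum_eq_zero fun b hb => hQ b (Finset.mem_union_left _ hb),
    Finset.sum_eq_zero fun b hb => hQ b (Finset.mem_union_right _ hb)] at this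
  simp at this

variable {ι R : Type*} [CommSemiring R] (H : Subgroup (Equiv.Perm ι)) [Fintype H]

noncomputable def symmetrize : MvPolynomial ι R →ₗ[R] MvPolynomial ι R :=
  ∑ h : H, (rename (h : Equiv.Perm ι)).toLinearMap

variable {H}

theorem symmetrize_apply (Q : MvPolynomial ι R) :
    symmetrize H Q = ∑ h : H, rename (h : Equiv.Perm ι) Q := by
  simp [symmetrize]

theorem rename_symmetrize_of_mem {σ : Equiv.Perm ι} (hσ : σ ∈ H) (Q : MvPolynomial ι R) :
    rename σ (symmetrize H Q) = symmetrize H Q := by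
  simp only [symmetrize_apply, map_sum, rename_rename, ← Equiv.Perm.coe_mul]
  exact Fintype.sum_equiv (Equiv.mulLeft ⟨σ, hσ⟩) _ _ fun _ => by simp

theorem rename_symmetrize_eq_of_inv_mul_mem {σ τ : Equiv.Perm ι} (h : σ⁻¹ * τ ∈ H)
    (Q : MvPolynomial ι R) : rename τ (symmetrize H Q) = rename σ (symmetrize H Q) := by
  rw [← mul_inv_cancel_left σ τ, Equiv.Perm.coe_mul, ← rename_rename,
    rename_symmetrize_of_mem h]

theorem aeval_rename_symmetrize {S : Type*} [CommSemiring S] [Algebra R S] (α : ι → S)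
    (σ : Equiv.Perm ι) (Q : MvPolynomial ι R) :
    aeval α (rename σ (symmetrize H Q)) = ∑ h : H, aeval (α ∘ ⇑(σ * h)) Q := by
  simp [symmetrize_apply, aeval_rename]

theorem exists_aeval_rename_symmetrize_ne {k K : Type*} [CommSemiring k] [Field K] [Algebra k K]
    {α : ι → K} (hα : Function.Injective α) {σ τ : Equiv.Perm ι} (h : σ⁻¹ * τ ∉ H) :
    ∃ Q : MvPolynomial ι k,
      aeval α (rename σ (symmetrize H Q)) ≠ aeval α (rename τ (symmetrize H Q)) := by
  have hinj : Function.Injective fun g : Equiv.Perm ι => α ∘ ⇑g :=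
    hα.comp_left.comp Equiv.coe_fn_injective
  let points (g : Equiv.Perm ι) : Finset (ι → K) :=
    Finset.univ.map ⟨fun h : H => α ∘ ⇑(g * h),
      hinj.comp ((mul_right_injective g).comp Subtype.val_injective)⟩
  have hdisj : Disjoint (points σ) (points τ) := by
    refine Finset.disjoint_left.2 fun x hσ hτ => h ?_
    obtain ⟨a, -, rfl⟩ := Finset.mem_map.1 hσ
    obtain ⟨b, -, hab⟩ := Finset.mem_map.1 hτ
    have hab : τ * b = σ * a := hinj hab
    rw [show σ⁻¹ * τ = a * (b : Equiv.Perm ι)⁻¹ by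
      rw [eq_mul_inv_iff_mul_eq, mul_assoc, hab, inv_mul_cancel_left]]
    exact H.mul_mem a.2 (H.inv_mem b.2)
  obtain ⟨Q, hQ⟩ := exists_sum_aeval_ne_sum_aeval (k := k)
    (Finset.map_nonempty.2 Finset.univ_nonempty) hdisj
  exact ⟨Q, by simpa [points, aeval_rename_symmetrize] using hQ⟩

theorem exists_forall_aeval_rename_symmetrize_ne [Finite ι] {k K : Type*} [Field k] [Infinite k]
    [Field K] [Algebra k K] {α : ι → K} (hα : Function.Injective α) :
    ∃ Q : MvPolynomial ι k, ∀ σ τ : Equiv.Perm ι, σ⁻¹ * τ ∉ H →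
      aeval α (rename σ (symmetrize H Q)) ≠ aeval α (rename τ (symmetrize H Q)) := by
  let f (p : {p : Equiv.Perm ι × Equiv.Perm ι // p.1⁻¹ * p.2 ∉ H}) :
      MvPolynomial ι k →ₗ[k] K :=
    (aeval α).toLinearMap ∘ₗ ((rename p.1.1).toLinearMap - (rename p.1.2).toLinearMap) ∘ₗ
      symmetrize H
  have hf (p) (Q) : f p Q = aeval α (rename p.1.1 (symmetrize H Q)) -
      aeval α (rename p.1.2 (symmetrize H Q)) := by
    simp [f]
  obtain ⟨Q, hQ⟩ :=
    Submodule.exists_forall_notMem_of_forall_ne_top (fun p => LinearMap.ker (f p)) fun p => by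
      obtain ⟨Q, hQ⟩ := exists_aeval_rename_symmetrize_ne (k := k) hα p.2
      exact fun htop =>
        hQ <| sub_eq_zero.1 <| (hf p Q).symm.trans (Submodule.eq_top_iff'.1 htop Q)
  refine ⟨Q, fun σ τ h => ?_⟩
  simpa [hf, sub_eq_zero] using hQ ⟨(σ, τ), h⟩

end MvPolynomial

theorem exists_separable_resolvent_invariant_general (k : Type*) {K : Type*} [Field k] [Field K]
    [Algebra k K] [Infinite k] {n : ℕ}
    (α : Fin n → K) (hinj : Function.Injective α)
    (H L : Subgroup (Equiv.Perm (Fin n))) :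
    ∃ P : MvPolynomial (Fin n) k,
      (∀ σ ∈ L, (rename ⇑σ P = P ↔ σ ∈ H)) ∧
      (∀ σ ∈ L, ∀ τ ∈ L,
        (MvPolynomial.aeval α (rename ⇑σ P) = MvPolynomial.aeval α (rename ⇑τ P) ↔
          σ⁻¹ * τ ∈ H)) := by
  classical
  obtain ⟨Q, hQ⟩ := exists_forall_aeval_rename_symmetrize_ne (k := k) (H := H) hinj
  have hsep (σ τ : Equiv.Perm (Fin n)) : aeval α (rename σ (symmetrize H Q)) =
      aeval α (rename τ (symmetrize H Q)) ↔ σ⁻¹ * τ ∈ H :=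
    ⟨not_imp_not.1 (hQ σ τ), fun h => by rw [rename_symmetrize_eq_of_inv_mul_mem h]⟩
  refine ⟨symmetrize H Q, fun σ _ => ⟨fun h => ?_, fun h => rename_symmetrize_of_mem h Q⟩,
    fun σ _ τ _ => hsep σ τ⟩
  simpa using (hsep σ 1).1 (by rw [h, Equiv.Perm.coe_one, rename_id_apply])

/-- over an infinite field there is an `H`-invariant `L`-primitive polynomial
whose `L`-relative resolvent of `α` has no multiple root. -/
theorem exists_separable_resolvent_invariant (k : Type*) {K : Type*} [Field k] [Field K]
    [Algebra k K] [Infinite k] {n : ℕ}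
    (α : Fin n → K) (hinj : Function.Injective α)
    (hcoeff : ∀ m : ℕ, (∏ i : Fin n, (Polynomial.X - Polynomial.C (α i)) : Polynomial K).coeff m ∈
      (algebraMap k K).range)
    (hgen : Algebra.adjoin k (Set.range α) = ⊤)
    (H L : Subgroup (Equiv.Perm (Fin n))) (hHL : H ≤ L) :
    ∃ P : MvPolynomial (Fin n) k,
      (∀ σ ∈ L, (rename ⇑σ P = P ↔ σ ∈ H)) ∧
      (∀ σ ∈ L, ∀ τ ∈ L,
        (MvPolynomial.aeval α (rename ⇑σ P) = MvPolynomial.aeval α (rename ⇑τ P) ↔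
          σ⁻¹ * τ ∈ H)) :=
  exists_separable_resolvent_invariant_general k α hinj H L
end
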